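/- arXiv:1501.02973 — 3 statements merged into one kernel-verified Lean document; each statement's English description precedes it below -/
import Mathlib

section
/- Let F be a positive integer, π : Fin F ≃ Fin F a bijection pairing sub-C-UE m with sub-V-UE π(m), and let σ² > 0 and, for each index, H'_m ≥ 0, G'_k ≥ 0, H_k > 0, G_{mk} ≥ 0, γ̄^T_k ≥ 0 be real parameters. Suppose S : Fin F → ℝ and P : Fin F → ℝ satisfy S_m ≥ 0 and P_k ≥ 0 for all m, k, and the SINR constraints P_k * H_k ≥ γ̄^T_k * (σ² + S_{π⁻¹(k)} * G_{π⁻¹(k) k}) for all k. Define P'_k := γ̄^T_k * (σ² + S_{π⁻¹(k)} * G_{π⁻¹(k) k}) / H_k. Then: (i) 0 ≤ P'_k ≤ P_k for all k (so (S, P') satisfies the SINR constraints with equality and any upper bounds on sums of the P_k remain satisfied); and (ii) Σ_m log₂(1 + S_m * H'_m / (σ² + P'_{π(m)} * G'_{π(m)})) ≥ Σ_m log₂(1 + S_m * H'_m / (σ² + P_{π(m)} * G'_{π(m)})). -/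
/-- Eliminating the V-UE powers by tightening the SINR constraints: given a
feasible power allocation `(S, P)`, the powers `P'ₖ` defined by making each
SINR constraint hold with equality satisfy `0 ≤ P'ₖ ≤ Pₖ` and do not decrease
the sub-C-UEs' sum rate. -/
theorem tighten_sinr_constraints
    (F : ℕ) (hF : 0 < F) (π : Fin F ≃ Fin F)
    (σ2 : ℝ) (hσ : 0 < σ2)
    (H' G' H γT : Fin F → ℝ) (G : Fin F → Fin F → ℝ)
    (hH' : ∀ m, 0 ≤ H' m) (hG' : ∀ k, 0 ≤ G' k) (hH : ∀ k, 0 < H k)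
    (hG : ∀ m k, 0 ≤ G m k) (hγ : ∀ k, 0 ≤ γT k)
    (S P : Fin F → ℝ) (hS : ∀ m, 0 ≤ S m) (hP : ∀ k, 0 ≤ P k)
    (hSINR : ∀ k, P k * H k ≥ γT k * (σ2 + S (π.symm k) * G (π.symm k) k))
    (P' : Fin F → ℝ)
    (hP' : ∀ k, P' k = γT k * (σ2 + S (π.symm k) * G (π.symm k) k) / H k) :
    (∀ k, 0 ≤ P' k ∧ P' k ≤ P k) ∧
    ∑ m, Real.logb 2 (1 + S m * H' m / (σ2 + P' (π m) * G' (π m))) ≥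
      ∑ m, Real.logb 2 (1 + S m * H' m / (σ2 + P (π m) * G' (π m))) := by
  have hbounds : ∀ k, 0 ≤ P' k ∧ P' k ≤ P k := by
    intro k
    have hnum : 0 ≤ γT k * (σ2 + S (π.symm k) * G (π.symm k) k) := by
      have : (0:ℝ) ≤ σ2 + S (π.symm k) * G (π.symm k) k := by
        have := mul_nonneg (hS (π.symm k)) (hG (π.symm k) k); linarith
      exact mul_nonneg (hγ k) this
    constructor
    · rw [hP' k]; exact div_nonneg hnum (hH k).le
    · rw [hP' k]
      rw [div_le_iff₀ (hH k)]
      exact hSINR k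
  refine ⟨hbounds, ?_⟩
  apply Finset.sum_le_sum
  intro m _
  have hd1 : (0:ℝ) < σ2 + P' (π m) * G' (π m) := by
    have := (hbounds (π m)).1
    have := hG' (π m)
    positivity
  have hd2 : σ2 + P' (π m) * G' (π m) ≤ σ2 + P (π m) * G' (π m) := by
    have := mul_le_mul_of_nonneg_right (hbounds (π m)).2 (hG' (π m))
    linarith
  have hnum : (0:ℝ) ≤ S m * H' m := mul_nonneg (hS m) (hH' m)
  have hfrac : S m * H' m / (σ2 + P (π m) * G' (π m)) ≤
      S m * H' m / (σ2 + P' (π m) * G' (π m)) :=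
    div_le_div_of_nonneg_left hnum hd1 hd2
  have h1 : (0:ℝ) < 1 + S m * H' m / (σ2 + P (π m) * G' (π m)) := by
    have : (0:ℝ) ≤ S m * H' m / (σ2 + P (π m) * G' (π m)) :=
      div_nonneg hnum (by linarith)
    linarith
  exact Real.logb_le_logb_of_le (by norm_num) h1 (by linarith)
end

section
/- Let a ≥ 0, b > 0, c ≥ 0 be real numbers. Then the function x ↦ Real.log ((b + (a + c) * x) / (b + c * x)) is concave on the set [0, ∞) of nonnegative reals. -/
private lemma aux_concave (A b C : ℝ) (hb : 0 < b) (hC : 0 ≤ C) (hCA : C ≤ A) :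
    ConcaveOn ℝ (Set.Ici (0 : ℝ))
      (fun x => Real.log (b + A * x) - Real.log (b + C * x)) := by
  have hA : 0 ≤ A := le_trans hC hCA
  have posA : ∀ x : ℝ, 0 ≤ x → 0 < b + A * x := fun x hx => by positivity
  have posC : ∀ x : ℝ, 0 ≤ x → 0 < b + C * x := fun x hx => by positivity
  have hder : ∀ x : ℝ, 0 ≤ x →
      HasDerivAt (fun x => Real.log (b + A * x) - Real.log (b + C * x))
        (A / (b + A * x) - C / (b + C * x)) x := by
    intro x hx
    have h1 : HasDerivAt (fun x : ℝ => b + A * x) A x := by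
      simpa using ((hasDerivAt_id x).const_mul A).const_add b
    have h2 : HasDerivAt (fun x : ℝ => b + C * x) C x := by
      simpa using ((hasDerivAt_id x).const_mul C).const_add b
    exact (h1.log (posA x hx).ne').sub (h2.log (posC x hx).ne')
  apply AntitoneOn.concaveOn_of_deriv (convex_Ici 0)
  · intro x hx
    exact ((hder x hx).continuousAt).continuousWithinAt
  · rw [interior_Ici]
    intro x hx
    exact ((hder x (le_of_lt hx)).differentiableAt).differentiableWithinAt
  · rw [interior_Ici]
    intro x hx y hy hxy
    rw [(hder x (le_of_lt hx)).deriv, (hder y (le_of_lt hy)).deriv]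
    have px1 := posA x (le_of_lt hx)
    have px2 := posA y (le_of_lt hy)
    have qx1 := posC x (le_of_lt hx)
    have qx2 := posC y (le_of_lt hy)
    have key1 : C * (b + A * x) ≤ A * (b + C * x) := by nlinarith
    have key2 : C * (b + A * y) ≤ A * (b + C * y) := by nlinarith
    rw [div_sub_div _ _ px2.ne' qx2.ne', div_sub_div _ _ px1.ne' qx1.ne',
      div_le_div_iff₀ (by positivity) (by positivity)]
    nlinarith [mul_le_mul key1 key2 (by positivity) (by positivity),
      mul_nonneg (sub_nonneg.2 hxy) (mul_pos px1 px2).le,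
      mul_nonneg (sub_nonneg.2 hxy) (mul_pos qx1 qx2).le]

/-- The logarithm of the linear-fractional function
`x ↦ (b + (a + c) x)/(b + c x)` with `a ≥ 0`, `b > 0`, `c ≥ 0` is concave on
the nonnegative reals. -/
theorem log_linear_fractional_concave
    (a b c : ℝ) (ha : 0 ≤ a) (hb : 0 < b) (hc : 0 ≤ c) :
    ConcaveOn ℝ (Set.Ici (0 : ℝ))
      (fun x => Real.log ((b + (a + c) * x) / (b + c * x))) := by
  have hg := aux_concave (a + c) b c hb hc (by linarith)
  have heq : ∀ x : ℝ, x ∈ Set.Ici (0 : ℝ) →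
      Real.log ((b + (a + c) * x) / (b + c * x)) =
      Real.log (b + (a + c) * x) - Real.log (b + c * x) := by
    intro x hx
    have h1 : (0:ℝ) < b + (a + c) * x := by
      have : (0:ℝ) ≤ x := hx
      positivity
    have h2 : (0:ℝ) < b + c * x := by
      have : (0:ℝ) ≤ x := hx
      positivity
    exact Real.log_div h1.ne' h2.ne'
  refine ⟨convex_Ici 0, fun x hx y hy p q hp hq hpq => ?_⟩
  have hxy : p • x + q • y ∈ Set.Ici (0 : ℝ) := (convex_Ici 0) hx hy hp hq hpq
  simp only [heq x hx, heq y hy, heq _ hxy]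
  exact hg.2 hx hy hp hq hpq
end

section
/- Let σ² > 0, H > 0, H' ≥ 0, G ≥ 0, G' ≥ 0, and γ̄^T ≥ 0 be real numbers. Then the function S ↦ Real.log (1 + S * H' / (σ² + (γ̄^T * (σ² + S * G) / H) * G')) is concave on the set [0, ∞) of nonnegative reals. -/
open Set Real

/- The denominator is affine in `S`, so the rate is `log ∘ f` with
`f S = 1 + S H' / (A + B S)`, `A > 0`, `B ≥ 0`. The map `S ↦ S / (A + B S)` is concave on `[0, ∞)`
(its concavity defect is an explicit nonnegative rational function), and composing a positive
concave function with the increasing concave `log` keeps it concave. -/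

theorem ConcaveOn.log_comp {s : Set ℝ} {f : ℝ → ℝ} (hf : ConcaveOn ℝ s f)
    (hpos : ∀ x ∈ s, 0 < f x) : ConcaveOn ℝ s (fun x => log (f x)) := by
  refine ⟨hf.1, fun x hx y hy a b ha hb hab => ?_⟩
  calc a • log (f x) + b • log (f y)
      ≤ log (a • f x + b • f y) :=
        strictConcaveOn_log_Ioi.concaveOn.2 (hpos x hx) (hpos y hy) ha hb hab
    _ ≤ log (f (a • x + b • y)) :=
        log_le_log (mem_Ioi.mp (convex_Ioi 0 (hpos x hx) (hpos y hy) ha hb hab))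
          (hf.2 hx hy ha hb hab)

theorem concaveOn_mul_div_add_mul {A B c : ℝ} (hA : 0 < A) (hB : 0 ≤ B) (hc : 0 ≤ c) :
    ConcaveOn ℝ (Ici 0) (fun x => x * c / (A + B * x)) := by
  refine ⟨convex_Ici 0, fun x (hx : 0 ≤ x) y (hy : 0 ≤ y) a b ha hb hab => ?_⟩
  simp only [smul_eq_mul]
  obtain rfl : b = 1 - a := by linarith
  have dx : 0 < A + B * x := by positivity
  have dy : 0 < A + B * y := by positivity
  have dz : 0 < A + B * (a * x + (1 - a) * y) := by positivity
  have defect : (a * x + (1 - a) * y) * c / (A + B * (a * x + (1 - a) * y))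
      - (a * (x * c / (A + B * x)) + (1 - a) * (y * c / (A + B * y)))
      = a * (1 - a) * A * B * c * (x - y) ^ 2
        / ((A + B * (a * x + (1 - a) * y)) * ((A + B * x) * (A + B * y))) := by
    field_simp
    ring
  have defect_nonneg : 0 ≤ a * (1 - a) * A * B * c * (x - y) ^ 2
      / ((A + B * (a * x + (1 - a) * y)) * ((A + B * x) * (A + B * y))) := by
    have : 0 ≤ 1 - a := hb
    positivity
  linarith

/-- After eliminating the sub-V-UE's power via the tight SINR constraint
`P = γ̄ᵀ (σ² + S G)/H`, the sub-C-UE's rate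
`S ↦ log(1 + S H'/(σ² + P G'))` is a concave function of its transmit power
`S ≥ 0`. -/
theorem reduced_rate_concave
    (σ2 H H' G G' γT : ℝ)
    (hσ : 0 < σ2) (hH : 0 < H) (hH' : 0 ≤ H') (hG : 0 ≤ G) (hG' : 0 ≤ G')
    (hγ : 0 ≤ γT) :
    ConcaveOn ℝ (Set.Ici (0 : ℝ))
      (fun S => Real.log (1 + S * H' / (σ2 + (γT * (σ2 + S * G) / H) * G'))) := by
  set A := σ2 + γT * σ2 / H * G'
  set B := γT * G / H * G'
  have hA : 0 < A := by positivity
  have hB : 0 ≤ B := by positivity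
  have affine_denominator : ∀ S, σ2 + γT * (σ2 + S * G) / H * G' = A + B * S := fun S => by ring
  simp_rw [affine_denominator]
  refine ConcaveOn.log_comp
    ((concaveOn_const 1 (convex_Ici 0)).add (concaveOn_mul_div_add_mul hA hB hH')) ?_
  intro S (hS : 0 ≤ S)
  positivity
end
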